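/- arXiv:1707.04054 — 5 statements merged into one kernel-verified Lean document; each statement's English description precedes it below -/
import Mathlib

section
/- The intersection of finitely many convergence sets in Ω is a convergence set in Ω. -/
/-!
Split the condition `∀ n, ‖a n‖ < r ^ n` into `‖a 0‖ < 1` and the geometric bound
`‖a n‖ ≤ r ^ (n + 1)`. Geometric bounds are well behaved: putting the squares of two sequences at
the even and odd indices gives a geometrically bounded sequence iff both are, and `‖c‖ < 1` is
itself a geometric bound, on `(n cⁿ)ⁿ⁺¹`. Interleaving each sequence with this witness for its
initial term gives a sequence starting with `0`, and interleaving two such sequences gives one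
whose convergence set is the intersection. All of these are polynomial in the original
functions, hence holomorphic. Finite intersections then follow by induction, starting from `Ω`,
the convergence set of the zero sequence.
-/

/-- `E` is a convergence set in `Ω ⊆ ℂ^N`. -/
def IsConvergenceSet (N : ℕ) (Ω E : Set (Fin N → ℂ)) : Prop :=
  ∃ f : ℕ → (Fin N → ℂ) → ℂ, (∀ n, DifferentiableOn ℂ (f n) Ω) ∧
    E = {z ∈ Ω | ∃ r > (0 : ℝ), ∀ n, ‖f n z‖ < r ^ n}

section Sequences

variable {𝕜 : Type*} [RCLike 𝕜]

def StrictPowBounded (a : ℕ → 𝕜) : Prop := ∃ r > (0 : ℝ), ∀ n, ‖a n‖ < r ^ n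

def PowBounded (a : ℕ → 𝕜) : Prop := ∃ r : ℝ, ∀ n, ‖a n‖ ≤ r ^ (n + 1)

lemma powBounded_iff_exists_one_le {a : ℕ → 𝕜} :
    PowBounded a ↔ ∃ r ≥ (1 : ℝ), ∀ n, ‖a n‖ ≤ r ^ (n + 1) := by
  refine ⟨fun ⟨r, hr⟩ => ⟨max |r| 1, le_max_right _ _, fun n => ?_⟩,
    fun ⟨r, _, hr⟩ => ⟨r, hr⟩⟩
  calc ‖a n‖ ≤ r ^ (n + 1) := hr n
    _ ≤ |r| ^ (n + 1) := (le_abs_self _).trans (abs_pow r _).le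
    _ ≤ max |r| 1 ^ (n + 1) := pow_le_pow_left₀ (abs_nonneg r) (le_max_left _ _) _

lemma strictPowBounded_iff {a : ℕ → 𝕜} :
    StrictPowBounded a ↔ ‖a 0‖ < 1 ∧ PowBounded a := by
  constructor
  · rintro ⟨r, hr0, hr⟩
    refine ⟨by simpa using hr 0, max r 1, fun n => (hr n).le.trans ?_⟩
    calc r ^ n ≤ max r 1 ^ n := pow_le_pow_left₀ (by positivity) (le_max_left _ _) n
      _ ≤ max r 1 ^ (n + 1) := pow_le_pow_right₀ (le_max_right _ _) n.le_succ
  · rintro ⟨h0, hb⟩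
    obtain ⟨r, hr1, hr⟩ := powBounded_iff_exists_one_le.1 hb
    refine ⟨r ^ 2 + 1, by positivity, fun n => ?_⟩
    rcases n with _ | n
    · simpa using h0
    calc ‖a (n + 1)‖ ≤ r ^ (n + 1 + 1) := hr _
      _ ≤ r ^ (2 * (n + 1)) := pow_le_pow_right₀ hr1 (by omega)
      _ = (r ^ 2) ^ (n + 1) := pow_mul r 2 _
      _ < (r ^ 2 + 1) ^ (n + 1) := pow_lt_pow_left₀ (by linarith) (by positivity) n.succ_ne_zero

def interleaveSq (a b : ℕ → 𝕜) (m : ℕ) : 𝕜 := (if Even m then a (m / 2) else b (m / 2)) ^ 2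

@[simp]
lemma interleaveSq_two_mul (a b : ℕ → 𝕜) (n : ℕ) : interleaveSq a b (2 * n) = a n ^ 2 := by
  simp [interleaveSq]

@[simp]
lemma interleaveSq_two_mul_add_one (a b : ℕ → 𝕜) (n : ℕ) :
    interleaveSq a b (2 * n + 1) = b n ^ 2 := by
  simp [interleaveSq, show (2 * n + 1) / 2 = n by omega]

@[simp]
lemma interleaveSq_zero (a b : ℕ → 𝕜) : interleaveSq a b 0 = a 0 ^ 2 := by
  simp [interleaveSq]

lemma powBounded_interleaveSq_iff {a b : ℕ → 𝕜} :
    PowBounded (interleaveSq a b) ↔ PowBounded a ∧ PowBounded b := by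
  constructor
  · intro h
    obtain ⟨r, hr1, hr⟩ := powBounded_iff_exists_one_le.1 h
    have hsq {x : 𝕜} {n m : ℕ} (hm : m ≤ 2 * n + 1) (hx : ‖x ^ 2‖ ≤ r ^ (m + 1)) :
        ‖x‖ ≤ r ^ (n + 1) := by
      rw [← pow_le_pow_iff_left₀ (norm_nonneg x) (by positivity) two_ne_zero, ← pow_mul,
        ← norm_pow]
      exact hx.trans (pow_le_pow_right₀ hr1 (by omega))
    refine ⟨⟨r, fun n => hsq (m := 2 * n) (by omega) ?_⟩, ⟨r, fun n => hsq le_rfl ?_⟩⟩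
    · simpa using hr (2 * n)
    · simpa using hr (2 * n + 1)
  · rintro ⟨ha, hb⟩
    obtain ⟨r, hr1, hr⟩ := powBounded_iff_exists_one_le.1 ha
    obtain ⟨s, hs1, hs⟩ := powBounded_iff_exists_one_le.1 hb
    have ht1 : 1 ≤ max r s := le_max_of_le_left hr1
    refine ⟨max r s ^ 2, fun m => ?_⟩
    have hhalf : ‖if Even m then a (m / 2) else b (m / 2)‖ ≤ max r s ^ (m / 2 + 1) := by
      split_ifs
      · exact (hr _).trans (pow_le_pow_left₀ (by positivity) (le_max_left _ _) _)
      · exact (hs _).trans (pow_le_pow_left₀ (by positivity) (le_max_right _ _) _)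
    calc ‖interleaveSq a b m‖ ≤ (max r s ^ (m / 2 + 1)) ^ 2 := by
          rw [interleaveSq, norm_pow]
          exact pow_le_pow_left₀ (norm_nonneg _) hhalf 2
      _ ≤ (max r s ^ (m + 1)) ^ 2 :=
          pow_le_pow_left₀ (by positivity) (pow_le_pow_right₀ ht1 (by omega)) 2
      _ = (max r s ^ 2) ^ (m + 1) := by rw [← pow_mul, ← pow_mul, mul_comm]

def unitDiscTest (c : 𝕜) (n : ℕ) : 𝕜 := ((n : 𝕜) * c ^ n) ^ (n + 1)

lemma powBounded_unitDiscTest_iff (c : 𝕜) : PowBounded (unitDiscTest c) ↔ ‖c‖ < 1 := by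
  have hnorm (n : ℕ) : ‖unitDiscTest c n‖ = (n * ‖c‖ ^ n) ^ (n + 1) := by
    simp [unitDiscTest, norm_pow]
  constructor
  · intro h
    obtain ⟨r, hr1, hr⟩ := powBounded_iff_exists_one_le.1 h
    by_contra! hc
    obtain ⟨n, hn⟩ := exists_nat_gt r
    have hle : (n : ℝ) * ‖c‖ ^ n ≤ r := by
      rw [← pow_le_pow_iff_left₀ (by positivity) (by positivity) n.succ_ne_zero, ← hnorm]
      exact hr n
    have : (n : ℝ) ≤ n * ‖c‖ ^ n :=
      le_mul_of_one_le_right n.cast_nonneg (one_le_pow₀ hc)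
    linarith
  · intro hc
    obtain ⟨M, hM⟩ := (tendsto_self_mul_const_pow_of_lt_one (norm_nonneg c) hc).bddAbove_range
    refine ⟨M, fun n => (hnorm n).le.trans (pow_le_pow_left₀ (by positivity) ?_ _)⟩
    exact hM ⟨n, rfl⟩

def convergenceCode (a : ℕ → 𝕜) : ℕ → 𝕜 := interleaveSq (unitDiscTest (a 0)) a

@[simp]
lemma convergenceCode_zero (a : ℕ → 𝕜) : convergenceCode a 0 = 0 := by
  simp [convergenceCode, unitDiscTest]

lemma powBounded_convergenceCode_iff {a : ℕ → 𝕜} :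
    PowBounded (convergenceCode a) ↔ StrictPowBounded a := by
  rw [convergenceCode, powBounded_interleaveSq_iff, powBounded_unitDiscTest_iff,
    strictPowBounded_iff]

lemma strictPowBounded_interleaveSq_convergenceCode_iff {a b : ℕ → 𝕜} :
    StrictPowBounded (interleaveSq (convergenceCode a) (convergenceCode b)) ↔
      StrictPowBounded a ∧ StrictPowBounded b := by
  simp [strictPowBounded_iff (a := interleaveSq _ _), powBounded_interleaveSq_iff,
    powBounded_convergenceCode_iff]

end Sequences

section Holomorphic

variable {N : ℕ} {Ω : Set (Fin N → ℂ)}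

lemma DifferentiableOn.interleaveSq {f g : ℕ → (Fin N → ℂ) → ℂ}
    (hf : ∀ n, DifferentiableOn ℂ (f n) Ω) (hg : ∀ n, DifferentiableOn ℂ (g n) Ω) (m : ℕ) :
    DifferentiableOn ℂ (fun z => interleaveSq (fun n => f n z) (fun n => g n z) m) Ω := by
  unfold _root_.interleaveSq
  split_ifs
  · exact (hf _).pow 2
  · exact (hg _).pow 2

lemma DifferentiableOn.convergenceCode {f : ℕ → (Fin N → ℂ) → ℂ}
    (hf : ∀ n, DifferentiableOn ℂ (f n) Ω) (m : ℕ) :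
    DifferentiableOn ℂ (fun z => convergenceCode (fun n => f n z) m) Ω :=
  DifferentiableOn.interleaveSq (fun n => (((hf 0).pow n).const_mul (n : ℂ)).pow (n + 1)) hf m

end Holomorphic

namespace IsConvergenceSet

variable {N : ℕ} {Ω E F : Set (Fin N → ℂ)}

lemma subset (hE : IsConvergenceSet N Ω E) : E ⊆ Ω := by
  obtain ⟨f, -, rfl⟩ := hE
  exact Set.sep_subset _ _

lemma self : IsConvergenceSet N Ω Ω :=
  ⟨fun _ _ => 0, fun _ => differentiableOn_const 0, by
    ext z
    simpa using fun _ : z ∈ Ω => ⟨1, one_pos, fun n => by simp⟩⟩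

lemma inter (hE : IsConvergenceSet N Ω E) (hF : IsConvergenceSet N Ω F) :
    IsConvergenceSet N Ω (E ∩ F) := by
  obtain ⟨f, hf, rfl⟩ := hE
  obtain ⟨g, hg, rfl⟩ := hF
  refine ⟨fun m z => interleaveSq (convergenceCode fun n => f n z)
      (convergenceCode fun n => g n z) m,
    DifferentiableOn.interleaveSq (DifferentiableOn.convergenceCode hf)
      (DifferentiableOn.convergenceCode hg), ?_⟩
  ext z
  have := strictPowBounded_interleaveSq_convergenceCode_iff
    (a := fun n => f n z) (b := fun n => g n z)
  simp only [StrictPowBounded] at this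
  simp only [Set.mem_inter_iff, Set.mem_ofPred_eq, this]
  tauto

lemma inter_biInter {ι : Type*} {E : ι → Set (Fin N → ℂ)} (s : Finset ι)
    (hE : ∀ i ∈ s, IsConvergenceSet N Ω (E i)) :
    IsConvergenceSet N Ω (Ω ∩ ⋂ i ∈ s, E i) := by
  classical
  induction s using Finset.induction_on with
  | empty => simpa using self
  | insert j s _ ih =>
    rw [Finset.set_biInter_insert, Set.inter_left_comm]
    exact (hE j (s.mem_insert_self j)).inter
      (ih fun i hi => hE i (Finset.mem_insert_of_mem hi))

lemma iInter {ι : Type*} [Finite ι] [Nonempty ι] {E : ι → Set (Fin N → ℂ)}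
    (hE : ∀ i, IsConvergenceSet N Ω (E i)) : IsConvergenceSet N Ω (⋂ i, E i) := by
  have := Fintype.ofFinite ι
  have hsub : ⋂ i, E i ⊆ Ω := (Set.iInter_subset E (Classical.arbitrary ι)).trans (hE _).subset
  simpa [Set.inter_eq_right.2 hsub] using inter_biInter Finset.univ fun i _ => hE i

end IsConvergenceSet

theorem stmt4_general (N : ℕ) (Ω : Set (Fin N → ℂ))
    (k : ℕ) (hk : 0 < k) (E : Fin k → Set (Fin N → ℂ))
    (hE : ∀ i, IsConvergenceSet N Ω (E i)) :
    IsConvergenceSet N Ω (⋂ i, E i) :=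
  have : Nonempty (Fin k) := ⟨⟨0, hk⟩⟩
  IsConvergenceSet.iInter hE

/-- The intersection of finitely many convergence sets in `Ω` is a convergence set in `Ω`. -/
theorem stmt4 (N : ℕ) (Ω : Set (Fin N → ℂ)) (hΩ : IsOpen Ω)
    (k : ℕ) (hk : 0 < k) (E : Fin k → Set (Fin N → ℂ))
    (hE : ∀ i, IsConvergenceSet N Ω (E i)) :
    IsConvergenceSet N Ω (⋂ i, E i) :=
  stmt4_general N Ω k hk E hE
end

section
/- Every countable subset of ℂ is a convergence set in ℂ; in particular, the set ℚ of rational numbers (as a subset of ℂ) is the convergence set of some formal power series with polynomial coefficients. -/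
/-!
Enumerate a countable set `E` as `a₀, a₁, …` and let `gⱼ = ∏_{k<j} (X - aₖ)`, so that `z ∈ E` iff
`gⱼ(z) = 0` for all large `j`. Interleaving the sequences `((j + 2)ⁿ gⱼ)ₙ` for all `j` gives a sequence
whose growth at `z` is exponential exactly when only finitely many `gⱼ(z)` are nonzero: a nonzero
`gⱼ(z)` forces the rate `j + 2`, and finitely many such `j` give a common bound.
-/

open Polynomial Filter Topology

variable {𝕜 : Type*} [RCLike 𝕜]

def convergenceSet (f : ℕ → 𝕜[X]) : Set 𝕜 :=
  {z | ∃ r > (0 : ℝ), ∀ n, ‖(f n).eval z‖ < r ^ n}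

/-- The `n`-th term is `(j + 2)ⁿ gⱼ` with `j = n.unpair.1`, so that each `gⱼ` appears along the
unbounded sequence of indices `Nat.pair j m`; the term `0` at `n = 0` avoids the constraint `‖f₀‖ < 1`. -/
noncomputable def amplify (g : ℕ → 𝕜[X]) (n : ℕ) : 𝕜[X] :=
  if n = 0 then 0 else C (((n.unpair.1 + 2 : ℕ) : 𝕜) ^ n) * g n.unpair.1

lemma norm_eval_amplify (g : ℕ → 𝕜[X]) {n : ℕ} (hn : n ≠ 0) (z : 𝕜) :
    ‖(amplify g n).eval z‖ = ((n.unpair.1 + 2 : ℕ) : ℝ) ^ n * ‖(g n.unpair.1).eval z‖ := by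
  rw [amplify, if_neg hn, eval_mul, eval_C, norm_mul, norm_pow, RCLike.norm_natCast]

lemma pow_mul_le_mul_one_add_pow {w c : ℝ} (hw : 0 ≤ w) (hc : 0 ≤ c) {n : ℕ} (hn : n ≠ 0) :
    w ^ n * c ≤ (w * (1 + c)) ^ n := by
  rw [mul_pow]
  gcongr
  calc c ≤ 1 + c := by linarith
    _ ≤ (1 + c) ^ n := le_self_pow₀ (by linarith) hn

lemma mem_convergenceSet_amplify {g : ℕ → 𝕜[X]} {z : 𝕜} (hz : ∀ᶠ j in atTop, (g j).eval z = 0) :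
    z ∈ convergenceSet (amplify g) := by
  obtain ⟨i, hi⟩ := eventually_atTop.1 hz
  set S := ∑ j ∈ Finset.range i, ((j + 2 : ℕ) : ℝ) * (1 + ‖(g j).eval z‖)
  have hS : 0 ≤ S := Finset.sum_nonneg fun j _ => by positivity
  refine ⟨1 + S, by linarith, fun n => ?_⟩
  rcases eq_or_ne n 0 with rfl | hn
  · simp [amplify]
  rw [norm_eval_amplify g hn]
  set j := n.unpair.1
  rcases lt_or_ge j i with hji | hij
  · have hterm : ((j + 2 : ℕ) : ℝ) * (1 + ‖(g j).eval z‖) ≤ S :=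
      Finset.single_le_sum (f := fun j => ((j + 2 : ℕ) : ℝ) * (1 + ‖(g j).eval z‖))
        (fun k _ => by positivity) (Finset.mem_range.2 hji)
    calc ((j + 2 : ℕ) : ℝ) ^ n * ‖(g j).eval z‖
        ≤ (((j + 2 : ℕ) : ℝ) * (1 + ‖(g j).eval z‖)) ^ n :=
          pow_mul_le_mul_one_add_pow (by positivity) (norm_nonneg _) hn
      _ < (1 + S) ^ n := pow_lt_pow_left₀ (by linarith) (by positivity) hn
  · rw [hi j hij, norm_zero, mul_zero]
    positivity

lemma notMem_convergenceSet_amplify {g : ℕ → 𝕜[X]} {z : 𝕜}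
    (hz : ∃ᶠ j in atTop, (g j).eval z ≠ 0) : z ∉ convergenceSet (amplify g) := by
  rintro ⟨r, hr, hbound⟩
  obtain ⟨j, hj, hjr⟩ :=
    (hz.and_eventually (tendsto_natCast_atTop_atTop.eventually_gt_atTop r)).exists
  have hrj : r < ((j + 2 : ℕ) : ℝ) := by
    push_cast
    linarith [hjr]
  set w : ℝ := ((j + 2 : ℕ) : ℝ)
  have hw : 0 < w := by positivity
  have hpair : Tendsto (fun m => Nat.pair j m) atTop atTop :=
    tendsto_atTop_mono (Nat.right_le_pair j) tendsto_id
  have hratio : Tendsto (fun m => (r / w) ^ Nat.pair j m) atTop (𝓝 0) :=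
    (tendsto_pow_atTop_nhds_zero_of_lt_one (by positivity) ((div_lt_one hw).2 hrj)).comp hpair
  obtain ⟨m, hm, hsmall⟩ := ((eventually_ge_atTop 1).and
    (hratio.eventually (gt_mem_nhds (norm_pos_iff.2 hj)))).exists
  set n := Nat.pair j m
  have hn : n ≠ 0 := (lt_of_lt_of_le hm (Nat.right_le_pair j m)).ne'
  have hjn : n.unpair.1 = j := by simp [n]
  have hgrowth : r ^ n < ‖(amplify g n).eval z‖ := by
    rw [norm_eval_amplify g hn, hjn]
    calc r ^ n = w ^ n * (r / w) ^ n := by rw [div_pow, mul_div_cancel₀ _ (by positivity)]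
      _ < w ^ n * ‖(g j).eval z‖ := by gcongr
  exact (hbound n).not_gt hgrowth

theorem convergenceSet_amplify (g : ℕ → 𝕜[X]) :
    convergenceSet (amplify g) = {z | ∀ᶠ j in atTop, (g j).eval z = 0} := by
  ext z
  refine ⟨fun hz => ?_, mem_convergenceSet_amplify⟩
  by_contra hfreq
  exact notMem_convergenceSet_amplify (not_eventually.1 hfreq) hz

theorem Set.Countable.exists_eventually_eval_eq_zero {R : Type*} [CommRing R] [IsDomain R]
    {E : Set R} (hE : E.Countable) :
    ∃ g : ℕ → R[X], {z | ∀ᶠ j in atTop, (g j).eval z = 0} = E := by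
  rcases E.eq_empty_or_nonempty with rfl | hne
  · exact ⟨fun _ => 1, Set.eq_empty_of_forall_notMem fun z hz => by simpa using hz.exists⟩
  obtain ⟨a, rfl⟩ := hE.exists_eq_range hne
  refine ⟨fun j => ∏ k ∈ Finset.range j, (X - C (a k)), ?_⟩
  ext z
  simp only [eval_prod, eval_sub, eval_X, eval_C, Finset.prod_eq_zero_iff, Finset.mem_range,
    sub_eq_zero, Set.mem_ofPred_eq, Set.mem_range]
  constructor
  · intro h
    obtain ⟨-, k, -, hk⟩ := h.exists
    exact ⟨k, hk.symm⟩
  · rintro ⟨k, rfl⟩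
    filter_upwards [eventually_gt_atTop k] with j hj using ⟨k, hj, rfl⟩

theorem Set.Countable.exists_convergenceSet_eq {E : Set 𝕜} (hE : E.Countable) :
    ∃ f : ℕ → 𝕜[X], convergenceSet f = E := by
  obtain ⟨g, hg⟩ := hE.exists_eventually_eval_eq_zero
  exact ⟨amplify g, (convergenceSet_amplify g).trans hg⟩

/-- Every countable subset of `ℂ` is a convergence set in `ℂ` (with polynomial
coefficients); in particular `ℚ ⊆ ℂ` is the convergence set of some formal power
series with polynomial coefficients. -/
theorem stmt6 :
    (∀ E : Set ℂ, E.Countable →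
      ∃ f : ℕ → Polynomial ℂ,
        {z : ℂ | ∃ r > (0 : ℝ), ∀ n, ‖(f n).eval z‖ < r ^ n} = E) ∧
    ∃ f : ℕ → Polynomial ℂ,
      {z : ℂ | ∃ r > (0 : ℝ), ∀ n, ‖(f n).eval z‖ < r ^ n} =
        Set.range (fun q : ℚ => (q : ℂ)) :=
  ⟨fun _ hE => hE.exists_convergenceSet_eq, (Set.countable_range _).exists_convergenceSet_eq⟩
end

section
/- A compact set E ⊆ Ω ⊆ ℂ is holomorphically convex in Ω if and only if no bounded connected component of ℂ \ E is contained in Ω. -/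
/-- The holomorphic hull of `E` in `Ω ⊆ ℂ`. -/
def holHull (Ω E : Set ℂ) : Set ℂ :=
  {z ∈ Ω | ∀ h : ℂ → ℂ, DifferentiableOn ℂ h Ω →
    ‖h z‖ ≤ sSup ((fun w => ‖h w‖) '' E)}

/-!
Let `A` be the closure in `C(E, ℂ)` of the restrictions of functions holomorphic on `Ω`, a
Banach algebra, and consider the coordinate `ζ` as an element of `A`. If `ζ - a` is invertible
in `A`, approximating its inverse by a holomorphic `h` makes `(ζ - a) h(ζ) - 1` small on `E`
while it equals `-1` at `a`, so `a` is not in the hull. Hence a point `z ∉ E` of the hull lies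
in the spectrum of `ζ` in `A`. Since the boundary of that spectrum lies in the spectrum `E` of
`ζ` in `C(E, ℂ)`, it contains the whole component of `z` in `Eᶜ`, which is therefore bounded;
and it misses `ℂ \ Ω`, where `(ζ - a)⁻¹` is holomorphic on `Ω`. The converse is the maximum
modulus principle on such a component.
-/

open Set

theorem frontier_connectedComponentIn_subset_compl {X : Type*} [TopologicalSpace X]
    [LocallyConnectedSpace X] {s : Set X} (hs : IsOpen s) (x : X) :
    frontier (connectedComponentIn s x) ⊆ sᶜ := by
  intro y ⟨hy_cl, hy_int⟩ hys
  obtain ⟨w, hwy, hwx⟩ := mem_closure_iff.1 hy_cl _ hs.connectedComponentIn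
    (mem_connectedComponentIn hys)
  have hy : y ∈ connectedComponentIn s x := by
    rw [connectedComponentIn_eq hwx, ← connectedComponentIn_eq hwy]
    exact mem_connectedComponentIn hys
  rw [← hs.connectedComponentIn.interior_eq] at hy
  exact hy_int hy

section Hull

variable {Ω E : Set ℂ}

theorem subset_holHull (hE : IsCompact E) (hEΩ : E ⊆ Ω) : E ⊆ holHull Ω E := by
  intro z hz
  refine ⟨hEΩ hz, fun h hd => le_csSup ?_ (mem_image_of_mem _ hz)⟩
  exact (hE.image_of_continuousOn (hd.continuousOn.mono hEΩ).norm).bddAbove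

/-- The maximum modulus principle on a bounded component of `Eᶜ` lying in `Ω`. -/
theorem mem_holHull_of_connectedComponentIn_subset (hE : IsCompact E) (hEΩ : E ⊆ Ω) {z : ℂ}
    (hz : z ∉ E) (hbd : Bornology.IsBounded (connectedComponentIn Eᶜ z))
    (hsub : connectedComponentIn Eᶜ z ⊆ Ω) : z ∈ holHull Ω E := by
  set U := connectedComponentIn Eᶜ z
  have hzU : z ∈ U := mem_connectedComponentIn hz
  have hfr : frontier U ⊆ E := by
    simpa using frontier_connectedComponentIn_subset_compl hE.isClosed.isOpen_compl z
  have hclU : closure U ⊆ Ω := by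
    rw [closure_eq_self_union_frontier U]
    exact union_subset hsub (hfr.trans hEΩ)
  refine ⟨hsub hzU, fun h hd => ?_⟩
  have hbdd : BddAbove ((fun w => ‖h w‖) '' E) :=
    (hE.image_of_continuousOn (hd.continuousOn.mono hEΩ).norm).bddAbove
  exact Complex.norm_le_of_forall_mem_frontier_norm_le hbd
    ⟨hd.mono hsub, hd.continuousOn.mono hclU⟩
    (fun x hx => le_csSup hbdd (mem_image_of_mem _ (hfr hx))) (subset_closure hzU)

end Hull

def holomorphicFunctions (Ω E : Set ℂ) : Subalgebra ℂ C(E, ℂ) where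
  carrier := {f | ∃ h : ℂ → ℂ, DifferentiableOn ℂ h Ω ∧ ∀ ζ : E, f ζ = h ζ}
  mul_mem' := by
    rintro f g ⟨h, hh, hf⟩ ⟨k, hk, hg⟩
    exact ⟨h * k, hh.mul hk, fun ζ => by simp [hf, hg]⟩
  add_mem' := by
    rintro f g ⟨h, hh, hf⟩ ⟨k, hk, hg⟩
    exact ⟨h + k, hh.add hk, fun ζ => by simp [hf, hg]⟩
  algebraMap_mem' c := ⟨fun _ => c, differentiableOn_const c, fun _ => rfl⟩

namespace holomorphicFunctions

variable (Ω E : Set ℂ) [CompactSpace E]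

noncomputable def coord : (holomorphicFunctions Ω E).topologicalClosure :=
  ⟨(ContinuousMap.id ℂ).restrict E,
    (holomorphicFunctions Ω E).le_topologicalClosure ⟨id, differentiableOn_id, fun _ => rfl⟩⟩

theorem spectrum_coord_val : spectrum ℂ (coord Ω E : C(E, ℂ)) = E := by
  simp [coord, ContinuousMap.spectrum_eq_range]

variable {Ω E}

theorem notMem_spectrum_coord {a : ℂ} (haΩ : a ∉ Ω) (haE : a ∉ E) :
    a ∉ spectrum ℂ (coord Ω E) := by
  have hsub : ∀ ζ : E, a - ζ ≠ 0 := fun ζ h => haE (sub_eq_zero.1 h ▸ ζ.2)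
  have hΩ : ∀ w ∈ Ω, a - w ≠ 0 := fun w hw h => haΩ (sub_eq_zero.1 h ▸ hw)
  have hd : DifferentiableOn ℂ (fun w => (a - w)⁻¹) Ω :=
    ((differentiableOn_const a).sub differentiableOn_id).inv hΩ
  let v : C(E, ℂ) := ⟨fun ζ => (a - ζ)⁻¹, by fun_prop (disch := exact hsub _)⟩
  have hv : v ∈ (holomorphicFunctions Ω E).topologicalClosure :=
    (holomorphicFunctions Ω E).le_topologicalClosure ⟨_, hd, fun _ => rfl⟩
  rw [spectrum.notMem_iff]
  refine IsUnit.of_mul_eq_one ⟨v, hv⟩ (Subtype.ext (ContinuousMap.ext fun ζ => ?_))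
  simp [v, coord, hsub ζ]

theorem norm_le_of_mem_holHull {z : ℂ} (hz : z ∈ holHull Ω E) {g : ℂ → ℂ}
    (hg : DifferentiableOn ℂ g Ω) {F : C(E, ℂ)} (hF : ∀ ζ : E, F ζ = g ζ) :
    ‖g z‖ ≤ ‖F‖ := by
  refine (hz.2 g hg).trans (Real.sSup_le ?_ (norm_nonneg F))
  rintro _ ⟨ζ, hζ, rfl⟩
  simpa [hF] using F.norm_coe_le_norm ⟨ζ, hζ⟩

theorem notMem_holHull_of_notMem_spectrum {a : ℂ}
    (ha : a ∉ spectrum ℂ (coord Ω E)) : a ∉ holHull Ω E := by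
  intro haH
  set S := (holomorphicFunctions Ω E).topologicalClosure
  obtain ⟨u, hu⟩ := spectrum.notMem_iff.1 ha
  set p : C(E, ℂ) := ((u : S) : C(E, ℂ))
  set v : C(E, ℂ) := ((↑u⁻¹ : S) : C(E, ℂ))
  have hp : ∀ ζ : E, p ζ = a - ζ := fun ζ => by simp [p, hu, coord]
  have hvp : v * p = 1 := congrArg Subtype.val u.inv_mul
  have hε : (0 : ℝ) < (‖p‖ + 1)⁻¹ := by positivity
  obtain ⟨f, ⟨h, hh, hf⟩, hvf⟩ := Metric.mem_closure_iff.1 (↑u⁻¹ : S).2 _ hε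
  have hbound := norm_le_of_mem_holHull haH (g := fun w => h w * (a - w) - 1)
    (hh.mul ((differentiableOn_const a).sub differentiableOn_id) |>.sub_const 1)
    (F := f * p - 1) (fun ζ => by simp [hf, hp])
  have hF : f * p - 1 = (f - v) * p := by rw [sub_mul, hvp]
  rw [dist_comm, dist_eq_norm] at hvf
  have hsmall : ‖(f - v) * p‖ < 1 := calc
    ‖(f - v) * p‖ ≤ ‖f - v‖ * ‖p‖ := norm_mul_le _ _
    _ ≤ (‖p‖ + 1)⁻¹ * ‖p‖ := by gcongr
    _ < 1 := by rw [inv_mul_lt_one₀ (by positivity)]; linarith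
  simp [hF] at hbound
  linarith

end holomorphicFunctions

open holomorphicFunctions in
theorem holHull_subset {Ω E : Set ℂ} (hE : IsCompact E)
    (h : ∀ z ∉ E, Bornology.IsBounded (connectedComponentIn Eᶜ z) →
        ¬ connectedComponentIn Eᶜ z ⊆ Ω) : holHull Ω E ⊆ E := by
  have : CompactSpace E := isCompact_iff_compactSpace.1 hE
  have : IsClosed ((holomorphicFunctions Ω E).topologicalClosure : Set C(E, ℂ)) :=
    Subalgebra.isClosed_topologicalClosure _
  intro z hzH
  by_contra hzE
  have hzσ : z ∈ spectrum ℂ (coord Ω E) := by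
    by_contra hz
    exact notMem_holHull_of_notMem_spectrum hz hzH
  have hσ := spectrum_coord_val Ω E
  have hU : connectedComponentIn Eᶜ z ⊆ spectrum ℂ (coord Ω E) := by
    rw [Subalgebra.spectrum_sUnion_connectedComponentIn _ (coord Ω E), hσ]
    exact (subset_biUnion_of_mem (mem_sdiff_of_mem hzσ hzE)).trans subset_union_right
  refine h z hzE ?_ fun a haU => ?_
  · simpa [hσ] using Subalgebra.spectrum_isBounded_connectedComponentIn _ _ hzσ
  · by_contra haΩ
    exact notMem_spectrum_coord haΩ (connectedComponentIn_subset _ _ haU) (hU haU)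

theorem stmt8_general (Ω : Set ℂ) (E : Set ℂ) (hE : IsCompact E) (hEΩ : E ⊆ Ω) :
    holHull Ω E = E ↔
      ∀ z ∉ E, Bornology.IsBounded (connectedComponentIn Eᶜ z) →
        ¬ connectedComponentIn Eᶜ z ⊆ Ω :=
  ⟨fun hhull _ hz hbd hsub =>
    hz (hhull ▸ mem_holHull_of_connectedComponentIn_subset hE hEΩ hz hbd hsub),
    fun h => (holHull_subset hE h).antisymm (subset_holHull hE hEΩ)⟩

/-- A compact set `E ⊆ Ω ⊆ ℂ` is holomorphically convex in `Ω` iff no bounded connected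
component of `ℂ \ E` is contained in `Ω`. -/
theorem stmt8 (Ω : Set ℂ) (hΩ : IsOpen Ω) (E : Set ℂ) (hE : IsCompact E) (hEΩ : E ⊆ Ω) :
    holHull Ω E = E ↔
      ∀ z ∉ E, Bornology.IsBounded (connectedComponentIn Eᶜ z) →
        ¬ connectedComponentIn Eᶜ z ⊆ Ω :=
  stmt8_general Ω E hE hEΩ
end

section
/- Let K be a compact subset of an open set Ω ⊆ ℂ that is holomorphically convex in Ω. Then ℂ \ K has only finitely many connected components. -/
/-!
Choose `R` with `K ⊆ closedBall 0 R`. Every component of `ℂ \ K` meets the compact set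
`C = {R + 1} ∪ (Ωᶜ ∩ closedBall 0 R)`, which avoids `K`: the unbounded component contains the
connected set `(closedBall 0 R)ᶜ`, and a bounded component lying in `Ω` has its frontier in `K`,
so by the maximum modulus principle it lies in the holomorphic hull of `K`, which is `K`.
Components of the open set `ℂ \ K` are open, so by compactness only finitely many of them meet `C`.
-/

open Metric Set Bornology

section LocallyConnected

variable {X : Type*} [TopologicalSpace X] [LocallyConnectedSpace X] {U : Set X}

theorem IsOpen.frontier_connectedComponentIn_subset (hU : IsOpen U) (x : X) :
    frontier (connectedComponentIn U x) ⊆ Uᶜ := by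
  intro w hw hwU
  have hS := hU.connectedComponentIn (x := x)
  rw [hS.frontier_eq] at hw
  obtain ⟨y, hyw, hyx⟩ := mem_closure_iff.mp hw.1 _ hU.connectedComponentIn
    (mem_connectedComponentIn hwU)
  rw [connectedComponentIn_eq hyx, ← connectedComponentIn_eq hyw] at hw
  exact hw.2 (mem_connectedComponentIn hwU)

theorem IsCompact.finite_image_connectedComponentIn (hU : IsOpen U) {C : Set X}
    (hC : IsCompact C) (hCU : C ⊆ U) : (connectedComponentIn U '' C).Finite := by
  obtain ⟨t, htC, hCt⟩ := hC.elim_nhds_subcover (connectedComponentIn U)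
    fun x hx => hU.connectedComponentIn.mem_nhds (mem_connectedComponentIn (hCU hx))
  refine (t.finite_toSet.image (connectedComponentIn U)).subset ?_
  rintro _ ⟨x, hx, rfl⟩
  obtain ⟨y, hyt, hxy⟩ := mem_iUnion₂.mp (hCt hx)
  exact ⟨y, hyt, connectedComponentIn_eq hxy⟩

end LocallyConnected

theorem isPreconnected_compl_closedBall {E : Type*} [NormedAddCommGroup E] [NormedSpace ℝ E]
    (h : 1 < Module.rank ℝ E) {R : ℝ} (hR : 0 ≤ R) : IsPreconnected (closedBall (0 : E) R)ᶜ := by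
  have himg : (fun p : E × ℝ => p.2 • p.1) '' (sphere 0 1 ×ˢ Ioi R) = (closedBall 0 R)ᶜ := by
    ext z
    simp only [mem_image, mem_prod, mem_sphere_zero_iff_norm, mem_Ioi, mem_compl_iff,
      mem_closedBall_zero_iff, not_le, Prod.exists]
    constructor
    · rintro ⟨v, t, ⟨hv, ht⟩, rfl⟩
      rwa [norm_smul, hv, Real.norm_eq_abs, mul_one, abs_of_pos (hR.trans_lt ht)]
    · intro hz
      have hz0 : ‖z‖ ≠ 0 := (hR.trans_lt hz).ne'
      refine ⟨‖z‖⁻¹ • z, ‖z‖, ⟨?_, hz⟩, ?_⟩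
      · rw [norm_smul, norm_inv, norm_norm, inv_mul_cancel₀ hz0]
      · rw [smul_smul, mul_inv_cancel₀ hz0, one_smul]
  rw [← himg]
  exact ((isPreconnected_sphere h 0 1).prod isPreconnected_Ioi).image _
    (continuous_snd.smul continuous_fst).continuousOn

theorem subset_holHull_of_frontier_subset {Ω K U : Set ℂ} (hK : IsCompact K) (hKΩ : K ⊆ Ω)
    (hUb : IsBounded U) (hUΩ : U ⊆ Ω) (hfr : frontier U ⊆ K) :
    U ⊆ holHull Ω K := by
  have hclU : closure U ⊆ Ω := by
    rw [closure_eq_self_union_frontier]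
    exact union_subset hUΩ (hfr.trans hKΩ)
  refine fun z hz => ⟨hUΩ hz, fun h hh => ?_⟩
  have hbdd : BddAbove ((fun w => ‖h w‖) '' K) :=
    hK.bddAbove_image (hh.continuousOn.mono hKΩ).norm
  exact Complex.norm_le_of_forall_mem_frontier_norm_le hUb
    ⟨hh.mono hUΩ, hh.continuousOn.mono hclU⟩
    (fun w hw => le_csSup hbdd (mem_image_of_mem _ (hfr hw))) (subset_closure hz)

theorem exists_mem_compl_of_holHull_eq {Ω K : Set ℂ} (hK : IsCompact K) (hKΩ : K ⊆ Ω)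
    (hconv : holHull Ω K = K) {z : ℂ} (hz : z ∉ K)
    (hb : IsBounded (connectedComponentIn Kᶜ z)) : ∃ x ∈ connectedComponentIn Kᶜ z, x ∉ Ω := by
  by_contra! hzΩ
  have hfr : frontier (connectedComponentIn Kᶜ z) ⊆ K := by
    simpa using hK.isClosed.isOpen_compl.frontier_connectedComponentIn_subset z
  exact hz (hconv ▸ subset_holHull_of_frontier_subset hK hKΩ hb hzΩ hfr
    (mem_connectedComponentIn hz))

/-- If `K ⊆ Ω` is compact and holomorphically convex in `Ω`, then `ℂ \ K` has only
finitely many connected components. -/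
theorem stmt10 (Ω : Set ℂ) (hΩ : IsOpen Ω) (K : Set ℂ) (hK : IsCompact K)
    (hKΩ : K ⊆ Ω) (hconv : holHull Ω K = K) :
    {S : Set ℂ | ∃ z, z ∉ K ∧ S = connectedComponentIn Kᶜ z}.Finite := by
  obtain ⟨R, hR, hKR⟩ := hK.isBounded.subset_closedBall_lt 0 0
  have hKc : IsOpen Kᶜ := hK.isClosed.isOpen_compl
  have hRK : (closedBall (0 : ℂ) R)ᶜ ⊆ Kᶜ := compl_subset_compl.mpr hKR
  set z₀ : ℂ := ((R + 1 : ℝ) : ℂ)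
  have hz₀ : z₀ ∉ closedBall 0 R := by
    rw [mem_closedBall_zero_iff, Complex.norm_real, Real.norm_of_nonneg (by linarith)]
    linarith
  set C := insert z₀ (Ωᶜ ∩ closedBall 0 R)
  have hC : IsCompact C := ((isCompact_closedBall 0 R).inter_left hΩ.isClosed_compl).insert z₀
  have hCK : C ⊆ Kᶜ :=
    insert_subset (hRK hz₀) (inter_subset_left.trans (compl_subset_compl.mpr hKΩ))
  have hmeet : ∀ z ∉ K, ∃ x ∈ C, x ∈ connectedComponentIn Kᶜ z := by
    intro z hz
    by_cases hbdd : connectedComponentIn Kᶜ z ⊆ closedBall 0 R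
    · obtain ⟨x, hxz, hxΩ⟩ :=
        exists_mem_compl_of_holHull_eq hK hKΩ hconv hz (isBounded_closedBall.subset hbdd)
      exact ⟨x, mem_insert_of_mem _ ⟨hxΩ, hbdd hxz⟩, hxz⟩
    · obtain ⟨w, hwz, hwR⟩ := not_subset.mp hbdd
      have hsub := (isPreconnected_compl_closedBall (by simp) hR.le).subset_connectedComponentIn
        hwR hRK
      exact ⟨z₀, mem_insert _ _, connectedComponentIn_eq hwz ▸ hsub hz₀⟩
  refine (hC.finite_image_connectedComponentIn hKc hCK).subset ?_
  rintro _ ⟨z, hz, rfl⟩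
  obtain ⟨x, hxC, hxz⟩ := hmeet z hz
  exact ⟨x, hxC, (connectedComponentIn_eq hxz).symm⟩
end

section
/- Every compact subset K of an open set Ω ⊆ ℂ that is holomorphically convex in Ω can be written as a countable union of polynomially convex compact sets. -/
/-!
If `K` is holomorphically convex in `Ω`, no bounded component of `ℂ \ K` lies in `Ω`: by the
maximum modulus principle it would lie in the holomorphic hull. Hence for every closed disc
`D ⊆ Ω` the complement of `K ∩ D` is connected, because a bounded component of it misses the
connected unbounded set `ℂ \ D` and is then a bounded component of `ℂ \ K` inside `D ⊆ Ω`.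
Countably many such discs cover `K`.

A compact `L` with connected complement is polynomially convex: in the uniform closure of the
polynomials in `C(L, ℂ)` the spectrum of the coordinate `w` can only differ from its spectrum `L`
in `C(L, ℂ)` by bounded components of `ℂ \ L`, of which there are none. So for `z ∉ L` the
function `1 / (z - w)` is a uniform limit of polynomials `q` on `L`, and `1 - (z - w) q` is a
polynomial peaking at `z`.
-/

/-- The polynomial hull of a set `K ⊆ ℂ`. -/
def polyHull (K : Set ℂ) : Set ℂ :=
  {z | ∀ P : Polynomial ℂ, ‖P.eval z‖ ≤ sSup ((fun w => ‖P.eval w‖) '' K)}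

open Set Metric Bornology Polynomial

theorem frontier_connectedComponentIn_compl_subset {α : Type*} [TopologicalSpace α]
    [LocallyConnectedSpace α] {K : Set α} (hK : IsClosed K) (x : α) :
    frontier (connectedComponentIn Kᶜ x) ⊆ K := by
  intro y hy
  by_contra hyK
  have hCy : IsOpen (connectedComponentIn Kᶜ y) := hK.isOpen_compl.connectedComponentIn
  obtain ⟨u, hux, huy⟩ := mem_closure_iff.mp hy.1 _ hCy (mem_connectedComponentIn hyK)
  have hxy : connectedComponentIn Kᶜ x = connectedComponentIn Kᶜ y := by
    rw [connectedComponentIn_eq hux, connectedComponentIn_eq huy]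
  apply hy.2
  rw [hxy, hCy.interior_eq]
  exact mem_connectedComponentIn hyK

theorem isPreconnected_compl_closedBall_s11 (c : ℂ) (r : ℝ) :
    IsPreconnected (closedBall c r)ᶜ := by
  have hpolar : (closedBall c r)ᶜ =
      (fun p : ℝ × ℝ => c + p.1 * Complex.exp (p.2 * Complex.I)) '' (Ioi r ×ˢ univ) := by
    ext w
    simp only [mem_compl_iff, mem_closedBall, not_le, dist_eq_norm, mem_image, mem_prod,
      mem_Ioi, mem_univ, and_true, Prod.exists]
    constructor
    · exact fun hw => ⟨_, _, hw, by rw [Complex.norm_mul_exp_arg_mul_I]; ring⟩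
    · rintro ⟨ρ, θ, hρ, rfl⟩
      rw [add_sub_cancel_left, norm_mul, Complex.norm_exp_ofReal_mul_I, mul_one,
        Complex.norm_real, Real.norm_eq_abs]
      exact hρ.trans_le (le_abs_self ρ)
  rw [hpolar]
  exact (isPreconnected_Ioi.prod isPreconnected_univ).image _ (by fun_prop)

theorem isPreconnected_compl_of_not_isBounded_connectedComponentIn {L : Set ℂ}
    (hL : IsBounded L) (h : ∀ y ∉ L, ¬ IsBounded (connectedComponentIn Lᶜ y)) :
    IsPreconnected Lᶜ := by
  obtain ⟨r, hr⟩ := hL.subset_closedBall 0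
  obtain ⟨e, he⟩ : (closedBall (0 : ℂ) r)ᶜ.Nonempty :=
    nonempty_compl.mpr fun h => NormedSpace.unbounded_univ ℝ ℂ (h ▸ isBounded_closedBall)
  refine isPreconnected_of_forall e fun y hy => ⟨connectedComponentIn Lᶜ y,
    connectedComponentIn_subset _ _, ?_, mem_connectedComponentIn hy,
    isPreconnected_connectedComponentIn⟩
  obtain ⟨u, hu, hur⟩ := not_subset.mp fun hsub => h y hy (isBounded_closedBall.subset hsub)
  rw [connectedComponentIn_eq hu]
  exact (isPreconnected_compl_closedBall_s11 0 r).subset_connectedComponentIn hur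
    (compl_subset_compl.mpr hr) he

theorem subset_polyHull {K : Set ℂ} (hK : IsCompact K) : K ⊆ polyHull K := fun _ hz P =>
  le_csSup (hK.image P.continuous.norm).bddAbove (mem_image_of_mem _ hz)

theorem exists_inverse_mem_topologicalClosure_polynomialFunctions {K : Set ℂ} [CompactSpace K]
    (hKc : IsPreconnected Kᶜ) {z : ℂ} (hz : z ∉ K) :
    ∃ g ∈ (polynomialFunctions K).topologicalClosure,
      (algebraMap ℂ C(K, ℂ) z - X.toContinuousMapOn K) * g = 1 := by
  set S := (polynomialFunctions K).topologicalClosure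
  have : IsClosed (S : Set C(K, ℂ)) := (polynomialFunctions K).isClosed_topologicalClosure
  let ι : S :=
    ⟨X.toContinuousMapOn K, (polynomialFunctions K).le_topologicalClosure ⟨X, trivial, rfl⟩⟩
  have hσ : spectrum ℂ (ι : C(K, ℂ)) = K := by
    rw [ContinuousMap.spectrum_eq_range]; ext; simp [ι]
  have hzι : z ∉ spectrum ℂ ι := by
    rwa [Subalgebra.spectrum_eq_of_isPreconnected_compl S ι (by rwa [hσ]), hσ]
  obtain ⟨u, hu⟩ := spectrum.notMem_iff.mp hzι
  refine ⟨(u⁻¹ : Sˣ), (u⁻¹ : Sˣ).1.2, ?_⟩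
  simpa [hu] using congrArg Subtype.val u.mul_inv

theorem exists_polynomial_eval_eq_one_norm_lt_one {K : Set ℂ} [CompactSpace K]
    (hKc : IsPreconnected Kᶜ) {z : ℂ} (hz : z ∉ K) :
    ∃ P : ℂ[X], P.eval z = 1 ∧ ‖P.toContinuousMapOn K‖ < 1 := by
  obtain ⟨g, hg, hzg⟩ := exists_inverse_mem_topologicalClosure_polynomialFunctions hKc hz
  set a := algebraMap ℂ C(K, ℂ) z - X.toContinuousMapOn K
  obtain ⟨_, ⟨q, -, rfl⟩, hq⟩ := mem_closure_iff.mp hg (‖a‖ + 1)⁻¹ (by positivity)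
  refine ⟨1 - (C z - X) * q, by simp, ?_⟩
  have hP : (1 - (C z - X) * q).toContinuousMapOn K = a * (g - q.toContinuousMapOn K) := by
    rw [mul_sub, hzg, C_eq_algebraMap]
    change toContinuousMapOnAlgHom K _ = _
    simp only [map_sub, map_mul, map_one, AlgHom.commutes]
    rfl
  calc ‖(1 - (C z - X) * q).toContinuousMapOn K‖
      ≤ ‖a‖ * ‖g - q.toContinuousMapOn K‖ := hP ▸ norm_mul_le _ _
    _ ≤ ‖a‖ * (‖a‖ + 1)⁻¹ := by gcongr; exact (dist_eq_norm g _ ▸ hq).le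
    _ < 1 := by rw [mul_inv_lt_iff₀ (by positivity)]; linarith

theorem polyHull_eq_self_of_isPreconnected_compl {K : Set ℂ} (hK : IsCompact K)
    (hKc : IsPreconnected Kᶜ) : polyHull K = K := by
  have : CompactSpace K := isCompact_iff_compactSpace.mp hK
  refine Subset.antisymm (fun z hz => ?_) (subset_polyHull hK)
  by_contra hzK
  obtain ⟨P, hPz, hPK⟩ := exists_polynomial_eval_eq_one_norm_lt_one hKc hzK
  have hsup : sSup ((fun w => ‖P.eval w‖) '' K) ≤ ‖P.toContinuousMapOn K‖ :=
    Real.sSup_le (by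
      rintro _ ⟨w, hw, rfl⟩
      exact (P.toContinuousMapOn K).norm_coe_le_norm ⟨w, hw⟩) (norm_nonneg _)
  have := hz P
  rw [hPz, norm_one] at this
  linarith

section HolomorphicallyConvex

variable {Ω K : Set ℂ}

theorem connectedComponentIn_compl_not_subset_of_holHull_eq (hK : IsCompact K) (hKΩ : K ⊆ Ω)
    (hconv : holHull Ω K = K) {y : ℂ} (hy : y ∉ K)
    (hb : IsBounded (connectedComponentIn Kᶜ y)) : ¬ connectedComponentIn Kᶜ y ⊆ Ω := by
  intro hCΩ
  have hfr := frontier_connectedComponentIn_compl_subset hK.isClosed y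
  have hcl : closure (connectedComponentIn Kᶜ y) ⊆ Ω := by
    rw [closure_eq_self_union_frontier]
    exact union_subset hCΩ (hfr.trans hKΩ)
  have hC : connectedComponentIn Kᶜ y ⊆ holHull Ω K := fun w hw => ⟨hCΩ hw, fun h hh =>
    Complex.norm_le_of_forall_mem_frontier_norm_le hb (hh.mono hcl).diffContOnCl
      (fun u hu => le_csSup (hK.image_of_continuousOn (hh.continuousOn.mono hKΩ).norm).bddAbove
        (mem_image_of_mem _ (hfr hu)))
      (subset_closure hw)⟩
  exact hy (hconv ▸ hC (mem_connectedComponentIn hy))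

theorem isPreconnected_compl_inter_closedBall (hK : IsCompact K) (hKΩ : K ⊆ Ω)
    (hconv : holHull Ω K = K) {c : ℂ} {r : ℝ} (hD : closedBall c r ⊆ Ω) :
    IsPreconnected (K ∩ closedBall c r)ᶜ := by
  refine isPreconnected_compl_of_not_isBounded_connectedComponentIn
    (isBounded_closedBall.subset inter_subset_right) fun y hy hb => ?_
  have hUD : connectedComponentIn (K ∩ closedBall c r)ᶜ y ⊆ closedBall c r := by
    intro u hu
    by_contra huD
    have hsub : (closedBall c r)ᶜ ⊆ connectedComponentIn (K ∩ closedBall c r)ᶜ y := by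
      rw [connectedComponentIn_eq hu]
      exact (isPreconnected_compl_closedBall_s11 c r).subset_connectedComponentIn huD
        (compl_subset_compl.mpr inter_subset_right)
    exact NormedSpace.unbounded_univ ℝ ℂ
      (union_compl_self (closedBall c r) ▸ isBounded_closedBall.union (hb.subset hsub))
  have hyK : y ∉ K := fun hyK => hy ⟨hyK, hUD (mem_connectedComponentIn hy)⟩
  have hCU : connectedComponentIn Kᶜ y ⊆ connectedComponentIn (K ∩ closedBall c r)ᶜ y :=
    connectedComponentIn_mono y (compl_subset_compl.mpr inter_subset_left)
  exact connectedComponentIn_compl_not_subset_of_holHull_eq hK hKΩ hconv hyK (hb.subset hCU)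
    (hCU.trans (hUD.trans hD))

end HolomorphicallyConvex

theorem exists_seq_closedBall_subset_cover {α : Type*} [PseudoMetricSpace α]
    [SecondCountableTopology α] [Nonempty α] {Ω K : Set α} (hΩ : IsOpen Ω) (hKΩ : K ⊆ Ω) :
    ∃ (c : ℕ → α) (r : ℕ → ℝ), (∀ n, closedBall (c n) (r n) ⊆ Ω) ∧
      K ⊆ ⋃ n, closedBall (c n) (r n) := by
  have hball : ∀ z ∈ K, ∃ ρ > 0, closedBall z ρ ⊆ Ω := fun z hz =>
    nhds_basis_closedBall.mem_iff.mp (hΩ.mem_nhds (hKΩ hz))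
  choose! ρ hρ0 hρΩ using hball
  obtain ⟨t, htK, htc, hKt⟩ := TopologicalSpace.countable_cover_nhdsWithin
    (f := fun z => closedBall z (ρ z)) fun z hz =>
      mem_nhdsWithin_of_mem_nhds (closedBall_mem_nhds z (hρ0 z hz))
  rcases t.eq_empty_or_nonempty with rfl | htne
  · -- here `K = ∅`, covered by balls of radius `-1`, which are empty
    exact ⟨fun _ => Classical.arbitrary α, fun _ => -1, fun _ => by simp, by simpa using hKt⟩
  · obtain ⟨c, rfl⟩ := htc.exists_eq_range htne
    exact ⟨c, ρ ∘ c, fun n => hρΩ _ (htK (mem_range_self n)),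
      by simpa [biUnion_range] using hKt⟩

/-- Every compact `K ⊆ Ω` that is holomorphically convex in `Ω` is a countable union
of polynomially convex compact sets. -/
theorem stmt11 (Ω : Set ℂ) (hΩ : IsOpen Ω) (K : Set ℂ) (hK : IsCompact K)
    (hKΩ : K ⊆ Ω) (hconv : holHull Ω K = K) :
    ∃ F : ℕ → Set ℂ, (∀ n, IsCompact (F n) ∧ polyHull (F n) = F n) ∧ K = ⋃ n, F n := by
  obtain ⟨c, r, hcrΩ, hKcr⟩ := exists_seq_closedBall_subset_cover hΩ hKΩ
  refine ⟨fun n => K ∩ closedBall (c n) (r n), fun n => ⟨hK.inter_right isClosed_closedBall,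
    polyHull_eq_self_of_isPreconnected_compl (hK.inter_right isClosed_closedBall)
      (isPreconnected_compl_inter_closedBall hK hKΩ hconv (hcrΩ n))⟩, ?_⟩
  rw [← inter_iUnion, inter_eq_left.mpr hKcr]
end
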